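/- arXiv:1710.08111 — 6 statements merged into one kernel-verified Lean document; each statement's English description precedes it below -/
import Mathlib

section
/- Let H be a radius-1 one-sided CA over a finite alphabet B with local rule h, let q ∈ B be a spreading state for H, and suppose H is nilpotent. Let F₀ be a radius-1 one-sided CA over a finite alphabet A with local rule f₀ such that F₀ is bijective and its inverse is also a radius-1 CA. Define the radius-1 CA 𝓕 and 𝓖 over A × B as in the construction. Then 𝓕 and 𝓖 are strongly conjugate: there is a homeomorphism φ : (ℕ → A × B) → (ℕ → A × B) with φ∘𝓕 = 𝓖∘φ and φ∘σ = σ∘φ. -/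
/-!
Split a configuration into its `A`-track `a` and its `B`-track `b`. Both `𝓕` and `𝓖` move `b` by
`H`; on the `A`-track `𝓖` does nothing while `𝓕` applies a map `maskedStep b` which is a bijection
(it is `F₀` off the cells where `H b` is `q` and the identity on them, and an explicit inverse is
assembled from the local rule of `F₀⁻¹`). Since `q` is spreading, the sets `{b | (H^n b) 0 = q}`
increase with `n`, so by compactness the nilpotent `H` is uniformly nilpotent: `H^N b = q^ℕ` for all
`b`. From then on `𝓕` no longer touches the `A`-track, so `φ (a, b) = (A-track of 𝓕^N (a, b), b)`
satisfies `φ ∘ 𝓕 = 𝓖 ∘ φ`. It is a continuous bijection of a compact Hausdorff space, hence a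
homeomorphism, and it commutes with the shift because every ingredient does.
-/

/-- The one-sided shift map `σ(c)(i) = c(i+1)`. -/
def shift {A : Type*} (c : ℕ → A) : ℕ → A := fun i => c (i + 1)

open Function

section RadiusOne

variable {α β : Type*}

def radiusOneMap (f : α × α → β) (c : ℕ → α) : ℕ → β := fun i => f (c i, c (i + 1))

theorem radiusOneMap_shift (f : α × α → β) (c : ℕ → α) :
    radiusOneMap f (shift c) = shift (radiusOneMap f c) := rfl

theorem continuous_radiusOneMap [TopologicalSpace α] [DiscreteTopology α] [TopologicalSpace β]
    (f : α × α → β) : Continuous (radiusOneMap f) :=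
  continuous_pi fun i => (continuous_of_discreteTopology (f := f)).comp
    ((continuous_apply i).prodMk (continuous_apply (i + 1)))

theorem localRule_comp_eq_of_radiusOneMap_comp_eq_id {f : α × α → β} {g : β × β → α}
    (hgf : radiusOneMap g ∘ radiusOneMap f = id) (x y z : α) : g (f (x, y), f (y, z)) = x :=
  congrFun (congrFun hgf fun i => if i = 0 then x else if i = 1 then y else z) 0

theorem exists_iterate_radiusOneMap_eq_const [Finite β] [TopologicalSpace β] [DiscreteTopology β]
    {h : β × β → β} {q : β} (hspread : ∀ b b' : β, b = q ∨ b' = q → h (b, b') = q)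
    (hnil : ∀ c, ∃ n, (radiusOneMap h)^[n] c = fun _ => q) :
    ∃ N, ∀ c, (radiusOneMap h)^[N] c = fun _ => q := by
  set H := radiusOneMap h
  let U : ℕ → Set (ℕ → β) := fun n => {c | H^[n] c 0 = q}
  have hU_open (n : ℕ) : IsOpen (U n) :=
    (isOpen_discrete {q}).preimage
      ((continuous_apply 0).comp ((continuous_radiusOneMap h).iterate n))
  have hU_mono : Monotone U := monotone_nat_of_le_succ fun n c (hc : H^[n] c 0 = q) => by
    change H^[n + 1] c 0 = q
    rw [iterate_succ_apply']
    exact hspread _ _ (Or.inl hc)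
  have hU_cover : Set.univ ⊆ ⋃ n, U n := fun c _ =>
    let ⟨n, hn⟩ := hnil c
    Set.mem_iUnion.2 ⟨n, congrFun hn 0⟩
  obtain ⟨N, hN⟩ := isCompact_univ.elim_directed_cover U hU_open hU_cover hU_mono.directed_le
  refine ⟨N, fun c => funext fun i => ?_⟩
  induction i generalizing c with
  | zero => exact hN (Set.mem_univ c)
  | succ i ih =>
    have hshift := ih (shift c)
    rwa [(Commute.iterate_left (radiusOneMap_shift h) N) c] at hshift

end RadiusOne

section SkewProduct

variable {ι α β : Type*}

def skewProduct (T : (ι → β) → ι → β) (S : (ι → β) → (ι → α) → ι → α) (c : ι → α × β) :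
    ι → α × β :=
  fun i => (S (Prod.snd ∘ c) (Prod.fst ∘ c) i, T (Prod.snd ∘ c) i)

theorem skewProduct_comp_skewProduct (T₁ T₂ : (ι → β) → ι → β)
    (S₁ S₂ : (ι → β) → (ι → α) → ι → α) :
    skewProduct T₂ S₂ ∘ skewProduct T₁ S₁ = skewProduct (T₂ ∘ T₁) fun b => S₂ (T₁ b) ∘ S₁ b :=
  rfl

theorem bijective_skewProduct_id {S : (ι → β) → (ι → α) → ι → α} (hS : ∀ b, Bijective (S b)) :
    Bijective (skewProduct id S) := by
  refine ⟨fun c c' hcc' => ?_, fun d => ?_⟩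
  · have hb : Prod.snd ∘ c = Prod.snd ∘ c' := (congrArg (Prod.snd ∘ ·) hcc' :)
    have hSa : S (Prod.snd ∘ c) (Prod.fst ∘ c) = S (Prod.snd ∘ c') (Prod.fst ∘ c') :=
      (congrArg (Prod.fst ∘ ·) hcc' :)
    rw [← hb] at hSa
    exact funext fun i => Prod.ext (congrFun ((hS _).injective hSa) i) (congrFun hb i)
  · obtain ⟨a, ha⟩ := (hS (Prod.snd ∘ d)).surjective (Prod.fst ∘ d)
    refine ⟨fun i => (a i, (d i).2), funext fun i => ?_⟩
    change (S (Prod.snd ∘ d) a i, (d i).2) = d i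
    rw [ha]
    rfl

theorem continuous_skewProduct [TopologicalSpace α] [TopologicalSpace β]
    {T : (ι → β) → ι → β} {S : (ι → β) → (ι → α) → ι → α} (hT : Continuous T)
    (hS : Continuous fun p : (ι → β) × (ι → α) => S p.1 p.2) :
    Continuous (skewProduct T S) := by
  have hsnd : Continuous fun c : ι → α × β => Prod.snd ∘ c :=
    continuous_pi fun j => (continuous_apply j).snd
  have hfst : Continuous fun c : ι → α × β => Prod.fst ∘ c :=
    continuous_pi fun j => (continuous_apply j).fst
  exact continuous_pi fun i => ((continuous_apply i).comp (hS.comp (hsnd.prodMk hfst))).prodMk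
    ((continuous_apply i).comp (hT.comp hsnd))

theorem skewProduct_comp_shift {T : (ℕ → β) → ℕ → β} {S : (ℕ → β) → (ℕ → α) → ℕ → α}
    (hT : ∀ b, T (shift b) = shift (T b)) (hS : ∀ b a, S (shift b) (shift a) = shift (S b a)) :
    skewProduct T S ∘ shift = shift ∘ skewProduct T S := by
  funext c i
  change (S (shift (Prod.snd ∘ c)) (shift (Prod.fst ∘ c)) i, T (shift (Prod.snd ∘ c)) i) =
    (S (Prod.snd ∘ c) (Prod.fst ∘ c) (i + 1), T (Prod.snd ∘ c) (i + 1))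
  rw [hS, hT]
  rfl

end SkewProduct

section Masked

variable {α β : Type*} [DecidableEq β] (h : β × β → β) (q : β) (f₀ : α × α → α)

def maskedStep (b : ℕ → β) (a : ℕ → α) : ℕ → α :=
  fun i => if h (b i, b (i + 1)) = q then a i else f₀ (a i, a (i + 1))

/-- Inverse of `maskedStep h q f₀ b` when `g₀` is the local rule of `F₀⁻¹`. Where cell `i + 1` is
masked, `y := a (i + 1) = c (i + 1)` is known and `a i` is recovered from `c i = f₀ (a i, y)` as
`g₀ (c i, f₀ (y, y))`, by applying `F₀⁻¹` to the image of `a i, y, y, …`. -/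
def maskedStepInv (g₀ : α × α → α) (b : ℕ → β) (c : ℕ → α) : ℕ → α := fun i =>
  if h (b i, b (i + 1)) = q then c i
  else if h (b (i + 1), b (i + 2)) = q then g₀ (c i, f₀ (c (i + 1), c (i + 1)))
  else g₀ (c i, c (i + 1))

def maskedIter : ℕ → (ℕ → β) → (ℕ → α) → ℕ → α
  | 0, _ => id
  | n + 1, b => maskedIter n (radiusOneMap h b) ∘ maskedStep h q f₀ b

variable {h q f₀}

theorem maskedStepInv_maskedStep {g₀ : α × α → α}
    (hgf : ∀ x y z, g₀ (f₀ (x, y), f₀ (y, z)) = x) (b : ℕ → β) :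
    LeftInverse (maskedStepInv h q f₀ g₀ b) (maskedStep h q f₀ b) := by
  intro a
  funext i
  simp only [maskedStep, maskedStepInv]
  split_ifs <;> simp_all

theorem maskedStep_maskedStepInv {g₀ : α × α → α}
    (hgf : ∀ x y z, g₀ (f₀ (x, y), f₀ (y, z)) = x) (hfg : ∀ x y z, f₀ (g₀ (x, y), g₀ (y, z)) = x)
    (b : ℕ → β) : RightInverse (maskedStepInv h q f₀ g₀ b) (maskedStep h q f₀ b) := by
  have hdecode (x y : α) : f₀ (g₀ (x, f₀ (y, y)), y) = x := by
    simpa only [hgf] using hfg x (f₀ (y, y)) (f₀ (y, y))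
  intro c
  funext i
  simp only [maskedStep, maskedStepInv]
  split_ifs <;> simp_all

theorem bijective_maskedStep {g₀ : α × α → α}
    (hgf : ∀ x y z, g₀ (f₀ (x, y), f₀ (y, z)) = x) (hfg : ∀ x y z, f₀ (g₀ (x, y), g₀ (y, z)) = x)
    (b : ℕ → β) : Bijective (maskedStep h q f₀ b) :=
  ⟨(maskedStepInv_maskedStep hgf b).injective, (maskedStep_maskedStepInv hgf hfg b).surjective⟩

theorem maskedStep_const (hq : h (q, q) = q) : maskedStep h q f₀ (fun _ => q) = id :=
  funext fun _ => funext fun _ => if_pos hq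

theorem maskedIter_succ' (n : ℕ) (b : ℕ → β) :
    maskedIter h q f₀ (n + 1) b =
      maskedStep h q f₀ ((radiusOneMap h)^[n] b) ∘ maskedIter h q f₀ n b := by
  induction n generalizing b with
  | zero => rfl
  | succ n ih =>
    change maskedIter h q f₀ (n + 1) (radiusOneMap h b) ∘ maskedStep h q f₀ b = _
    rw [ih, iterate_succ_apply]
    rfl

theorem maskedIter_succ_of_iterate_eq_const (hq : h (q, q) = q) {N : ℕ} {b : ℕ → β}
    (hN : (radiusOneMap h)^[N] b = fun _ => q) :
    maskedIter h q f₀ (N + 1) b = maskedIter h q f₀ N b := by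
  rw [maskedIter_succ', hN, maskedStep_const hq, id_comp]

theorem bijective_maskedIter (hstep : ∀ b, Bijective (maskedStep h q f₀ b)) (n : ℕ) (b : ℕ → β) :
    Bijective (maskedIter h q f₀ n b) := by
  induction n generalizing b with
  | zero => exact bijective_id
  | succ n ih => exact (ih _).comp (hstep b)

theorem maskedIter_shift (n : ℕ) (b : ℕ → β) (a : ℕ → α) :
    maskedIter h q f₀ n (shift b) (shift a) = shift (maskedIter h q f₀ n b a) := by
  induction n generalizing b a with
  | zero => rfl
  | succ n ih => exact ih (radiusOneMap h b) (maskedStep h q f₀ b a)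

section Topology

variable [TopologicalSpace α] [DiscreteTopology α] [TopologicalSpace β] [DiscreteTopology β]

theorem continuous_maskedStep :
    Continuous fun p : (ℕ → β) × (ℕ → α) => maskedStep h q f₀ p.1 p.2 :=
  continuous_pi fun i =>
    (continuous_of_discreteTopology
      (f := fun v : (β × β) × α × α => if h v.1 = q then v.2.1 else f₀ v.2)).comp
      (by fun_prop : Continuous fun p : (ℕ → β) × (ℕ → α) =>
        ((p.1 i, p.1 (i + 1)), p.2 i, p.2 (i + 1)))

theorem continuous_maskedIter (n : ℕ) :
    Continuous fun p : (ℕ → β) × (ℕ → α) => maskedIter h q f₀ n p.1 p.2 := by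
  induction n with
  | zero => exact continuous_snd
  | succ n ih =>
    exact ih.comp (((continuous_radiusOneMap h).comp continuous_fst).prodMk continuous_maskedStep)

end Topology

theorem skewProduct_maskedIter_comp (hq : h (q, q) = q) {N : ℕ}
    (hN : ∀ b, (radiusOneMap h)^[N] b = fun _ => q) :
    skewProduct id (maskedIter h q f₀ N) ∘ skewProduct (radiusOneMap h) (maskedStep h q f₀) =
      skewProduct (radiusOneMap h) (fun _ => id) ∘ skewProduct id (maskedIter h q f₀ N) := by
  rw [skewProduct_comp_skewProduct, skewProduct_comp_skewProduct]
  exact congrArg (skewProduct (radiusOneMap h))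
    (funext fun b => maskedIter_succ_of_iterate_eq_const hq (hN b))

end Masked

theorem construction_strongly_conjugate_of_nilpotent_general
    {A B : Type} [DecidableEq B] [Fintype A] [TopologicalSpace A] [DiscreteTopology A]
    [Fintype B] [TopologicalSpace B] [DiscreteTopology B]
    (h : B × B → B) (q : B) (f₀ : A × A → A)
    (H : (ℕ → B) → ℕ → B) (F₀ : (ℕ → A) → ℕ → A)
    (hH : ∀ c i, H c i = h (c i, c (i + 1)))
    (hF₀ : ∀ c i, F₀ c i = f₀ (c i, c (i + 1)))
    -- `q` is a spreading state for `H`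
    (hspread : ∀ b b' : B, b = q ∨ b' = q → h (b, b') = q)
    -- `H` is nilpotent
    (hnilp : ∃ q' : B, H (fun _ => q') = (fun _ => q') ∧ ∀ c, ∃ n, H^[n] c = fun _ => q')
    -- `F₀` is bijective, and its inverse is also a radius-1 CA
    (hinv : ∃ G₀ : (ℕ → A) → ℕ → A, (∃ g₀ : A × A → A, ∀ c i, G₀ c i = g₀ (c i, c (i + 1))) ∧
      G₀ ∘ F₀ = id ∧ F₀ ∘ G₀ = id)
    -- the CA `𝓕` and `𝓖` of the construction
    (𝓕 𝓖 : (ℕ → A × B) → ℕ → A × B)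
    (h𝓖 : ∀ c i, 𝓖 c i = ((c i).1, h ((c i).2, (c (i + 1)).2)))
    (h𝓕 : ∀ c i, 𝓕 c i =
      if h ((c i).2, (c (i + 1)).2) = q then ((c i).1, h ((c i).2, (c (i + 1)).2))
      else (f₀ ((c i).1, (c (i + 1)).1), h ((c i).2, (c (i + 1)).2))) :
    ∃ φ : (ℕ → A × B) ≃ₜ (ℕ → A × B), ⇑φ ∘ 𝓕 = 𝓖 ∘ ⇑φ ∧ ⇑φ ∘ shift = shift ∘ ⇑φ := by
  obtain ⟨G₀, ⟨g₀, hG₀⟩, hGF, hFG⟩ := hinv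
  obtain rfl : H = radiusOneMap h := funext fun c => funext (hH c)
  obtain rfl : F₀ = radiusOneMap f₀ := funext fun c => funext (hF₀ c)
  obtain rfl : G₀ = radiusOneMap g₀ := funext fun c => funext (hG₀ c)
  have hq : h (q, q) = q := hspread q q (Or.inl rfl)
  obtain ⟨q', -, hnil⟩ := hnilp
  obtain rfl : q = q' := by
    obtain ⟨n, hn⟩ := hnil fun _ => q
    exact congrFun ((iterate_fixed (funext fun _ => hq) n).symm.trans hn) 0
  obtain ⟨N, hN⟩ := exists_iterate_radiusOneMap_eq_const hspread hnil
  have h𝓕_eq : 𝓕 = skewProduct (radiusOneMap h) (maskedStep h q f₀) :=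
    funext fun c => funext fun i => by
      by_cases hc : h ((c i).2, (c (i + 1)).2) = q <;>
        simp only [h𝓕, hc, skewProduct, maskedStep, radiusOneMap, comp_apply, if_true, if_false]
  have h𝓖_eq : 𝓖 = skewProduct (radiusOneMap h) fun _ => id := funext fun c => funext (h𝓖 c)
  have hstep : ∀ b, Bijective (maskedStep h q f₀ b) := bijective_maskedStep
    (localRule_comp_eq_of_radiusOneMap_comp_eq_id hGF)
    (localRule_comp_eq_of_radiusOneMap_comp_eq_id hFG)
  have hφ := bijective_skewProduct_id (bijective_maskedIter hstep N)
  refine ⟨(continuous_skewProduct continuous_id (continuous_maskedIter N)).homeoOfEquivCompactToT2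
    (f := Equiv.ofBijective _ hφ), ?_, skewProduct_comp_shift (fun _ => rfl) (maskedIter_shift N)⟩
  rw [h𝓕_eq, h𝓖_eq]
  exact skewProduct_maskedIter_comp hq hN

/-- If `H` is a nilpotent radius-1 one-sided CA over `B` with spreading state `q`, and `F₀` is a
bijective radius-1 one-sided CA over `A` whose inverse is also a radius-1 CA, then the CA `𝓕`
and `𝓖` over `A × B` of the construction (where `𝓖 = id × H`, and `𝓕` applies `F₀` on the
`A`-track exactly where the `B`-track does not become `q`) are strongly conjugate. -/
theorem construction_strongly_conjugate_of_nilpotent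
    {A B : Type} [DecidableEq B] [Fintype A] [Nonempty A] [TopologicalSpace A] [DiscreteTopology A]
    [Fintype B] [Nonempty B] [TopologicalSpace B] [DiscreteTopology B]
    (h : B × B → B) (q : B) (f₀ : A × A → A)
    (H : (ℕ → B) → ℕ → B) (F₀ : (ℕ → A) → ℕ → A)
    (hH : ∀ c i, H c i = h (c i, c (i + 1)))
    (hF₀ : ∀ c i, F₀ c i = f₀ (c i, c (i + 1)))
    -- `q` is a spreading state for `H`
    (hspread : ∀ b b' : B, b = q ∨ b' = q → h (b, b') = q)
    -- `H` is nilpotent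
    (hnilp : ∃ q' : B, H (fun _ => q') = (fun _ => q') ∧ ∀ c, ∃ n, H^[n] c = fun _ => q')
    -- `F₀` is bijective, and its inverse is also a radius-1 CA
    (hbij : Function.Bijective F₀)
    (hinv : ∃ G₀ : (ℕ → A) → ℕ → A, (∃ g₀ : A × A → A, ∀ c i, G₀ c i = g₀ (c i, c (i + 1))) ∧
      G₀ ∘ F₀ = id ∧ F₀ ∘ G₀ = id)
    -- the CA `𝓕` and `𝓖` of the construction
    (𝓕 𝓖 : (ℕ → A × B) → ℕ → A × B)
    (h𝓖 : ∀ c i, 𝓖 c i = ((c i).1, h ((c i).2, (c (i + 1)).2)))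
    (h𝓕 : ∀ c i, 𝓕 c i =
      if h ((c i).2, (c (i + 1)).2) = q then ((c i).1, h ((c i).2, (c (i + 1)).2))
      else (f₀ ((c i).1, (c (i + 1)).1), h ((c i).2, (c (i + 1)).2))) :
    ∃ φ : (ℕ → A × B) ≃ₜ (ℕ → A × B), ⇑φ ∘ 𝓕 = 𝓖 ∘ ⇑φ ∧ ⇑φ ∘ shift = shift ∘ ⇑φ :=
  construction_strongly_conjugate_of_nilpotent_general h q f₀ H F₀ hH hF₀ hspread hnilp hinv 𝓕 𝓖 h𝓖
    h𝓕
end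

section
/- Let H be a radius-1 one-sided CA over a finite alphabet B with local rule h, let q ∈ B be a spreading state for H, and suppose H is NOT nilpotent. Let F₀ be a radius-1 one-sided CA over a finite alphabet A with h((ℕ→A), F₀) > log₂ |B|. Define the radius-1 CA 𝓕 and 𝓖 over A × B as in the construction. Then h((ℕ → A×B), 𝓕) > h((ℕ → A×B), 𝓖). -/
/-!
Since `q` spreads leftwards and persists, a `q` anywhere in the space-time triangle below a site
reaches that site; so if `H` is not nilpotent, arbitrarily large `q`-free triangles exist, and by
compactness some `b` has an orbit that never meets `q`. On the invariant set of configurations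
whose `B`-layer has such an orbit, `𝓕` runs `F₀` on the `A`-layer, so projecting to that layer
is a factor map onto the full shift and `h(𝓕) ≥ h(F₀)`. In `𝓖` the `A`-layer is frozen, so the
first `n` iterates on the sites `0, …, k` are determined by `k + 1` letters of `A` and `k + n`
letters of `B`, giving `h(𝓖) ≤ log |B|`.
-/

open Set Filter Function Dynamics
open scoped Uniformity

lemma shift_iterate_apply {A : Type*} (c : ℕ → A) (i j : ℕ) : shift^[i] c j = c (j + i) := by
  induction i generalizing c with
  | zero => rfl
  | succ i ih => rw [iterate_succ_apply, ih]; rfl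

def cylinderRel (Z : Type*) (k : ℕ) : SetRel (ℕ → Z) (ℕ → Z) := {p | ∀ i ≤ k, p.1 i = p.2 i}

lemma hasBasis_uniformity_cylinderRel (Z : Type*) [UniformSpace Z] [DiscreteUniformity Z] :
    (𝓤 (ℕ → Z)).HasBasis (fun _ => True) (cylinderRel Z) := by
  rw [Pi.uniformity]
  simp only [DiscreteUniformity.eq_principal_setRelId, comap_principal]
  refine (hasBasis_iInf_principal_finite _).to_hasBasis (fun t ht => ?_) fun k _ =>
    ⟨Iic k, finite_Iic k, fun p hp => ?_⟩
  · obtain ⟨k, hk⟩ := ht.bddAbove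
    exact ⟨k, trivial, fun p hp => mem_iInter₂.2 fun i hi => hp i (hk hi)⟩
  · exact fun i hi => mem_iInter₂.1 hp i hi

lemma coverMincard_le_card_of_fibers {X Y : Type*} [Fintype Y] (T : X → X) (F : Set X)
    (U : SetRel X X) (n : ℕ) (π : X → Y)
    (hπ : ∀ x y, π x = π y → (x, y) ∈ dynEntourage T U n) :
    coverMincard T F U n ≤ Fintype.card Y := by
  classical
  let s : Finset X := Finset.univ.image fun y : range π => y.2.choose
  have hcover : IsDynCoverOf T F U n s := fun x _ =>
    ⟨_, Finset.mem_image_of_mem _ (Finset.mem_univ ⟨π x, x, rfl⟩),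
      hπ _ _ (Exists.choose_spec (p := fun x' => π x' = π x) ⟨x, rfl⟩).symm⟩
  have hcard : s.card ≤ Fintype.card Y :=
    Finset.card_image_le.trans (Finset.card_univ.trans_le (Fintype.card_subtype_le _))
  exact hcover.coverMincard_le_card.trans (by exact_mod_cast hcard)

lemma coverEntropy_image_le_of_mapsTo {X Y : Type*} [UniformSpace X] [UniformSpace Y]
    {S : X → X} {T : Y → Y} {φ : X → Y} {G : Set X} (hG : MapsTo S G G)
    (hφ : UniformContinuous φ) (hsemi : ∀ x ∈ G, φ (S x) = T (φ x)) :
    coverEntropy T (φ '' G) ≤ coverEntropy S G := by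
  rw [← coverEntropy_restrict hG, ← range_domRestrict, ← image_univ]
  exact coverEntropy_image_le_of_uniformContinuous (φ := G.domRestrict φ)
    (S := hG.restrict S G G) (fun x => hsemi x x.2) (hφ.comp uniformContinuous_subtype_val) univ

section RadiusOne

variable {B : Type*} {h : B × B → B} {H : (ℕ → B) → ℕ → B}
  (hH : ∀ c i, H c i = h (c i, c (i + 1)))
include hH

lemma continuous_of_radius_one [TopologicalSpace B] [DiscreteTopology B] : Continuous H := by
  rw [show H = fun c i => h (c i, c (i + 1)) from funext₂ hH]
  exact continuous_pi fun i => continuous_of_discreteTopology.comp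
    ((continuous_apply i).prodMk (continuous_apply (i + 1)))

lemma commute_shift_of_radius_one : Function.Commute H shift :=
  fun c => funext fun i => by simp only [shift, hH]

lemma iterate_apply_congr_of_radius_one {b b' : ℕ → B} {j m : ℕ}
    (hbb' : ∀ p, j ≤ p → p ≤ j + m → b p = b' p) : H^[m] b j = H^[m] b' j := by
  induction m generalizing b b' with
  | zero => exact hbb' j le_rfl le_rfl
  | succ m ih =>
    refine ih fun p hjp hpm => ?_
    rw [hH, hH, hbb' p hjp (by omega), hbb' (p + 1) (by omega) (by omega)]

variable {q : B} (hspread : ∀ b b' : B, b = q ∨ b' = q → h (b, b') = q)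
include hspread

lemma iterate_apply_eq_of_le {b : ℕ → B} {m n p : ℕ} (hmn : m ≤ n) (hq : H^[m] b p = q) :
    H^[n] b p = q := by
  induction n, hmn using Nat.le_induction with
  | base => exact hq
  | succ n _ ih => rw [iterate_succ_apply', hH]; exact hspread _ _ (.inl ih)

lemma iterate_apply_eq_of_add_le {b : ℕ → B} {m n p j : ℕ} (hn : m + j ≤ n)
    (hq : H^[m] b (p + j) = q) : H^[n] b p = q := by
  induction j generalizing m with
  | zero => exact iterate_apply_eq_of_le hH hspread hn hq
  | succ j ih =>
    refine ih (m := m + 1) (by omega) ?_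
    rw [iterate_succ_apply', hH]
    exact hspread _ _ (.inr hq)

lemma exists_forall_iterate_apply_ne [TopologicalSpace B] [DiscreteTopology B] [Finite B]
    (hnotnilp : ¬ ∃ q' : B, H (fun _ => q') = (fun _ => q') ∧ ∀ c, ∃ n, H^[n] c = fun _ => q') :
    ∃ b : ℕ → B, ∀ m i, H^[m] b i ≠ q := by
  have hquiescent : H (fun _ => q) = fun _ => q := funext fun i => by
    rw [hH]; exact hspread _ _ (.inl rfl)
  obtain ⟨c, hc⟩ : ∃ c, ∀ n, H^[n] c ≠ fun _ => q := by
    simpa [hquiescent] using not_exists.1 hnotnilp q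
  let C : ℕ → Set (ℕ → B) := fun n => {b | ∀ m j, m + j ≤ n → H^[m] b j ≠ q}
  -- Shift `c` to a site `i` with `H^[n] c i ≠ q`; a `q` in the triangle would reach `i` by
  -- time `n`.
  have hC_nonempty (n : ℕ) : (C n).Nonempty := by
    obtain ⟨i, hi⟩ := ne_iff.1 (hc n)
    refine ⟨shift^[i] c, fun m j hmj hq => hi (iterate_apply_eq_of_add_le hH hspread hmj ?_)⟩
    rwa [add_comm, ← shift_iterate_apply (H^[m] c),
      ← ((commute_shift_of_radius_one hH).iterate_iterate m i).eq]
  have hC_closed (n : ℕ) : IsClosed (C n) := by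
    simp only [C, ofPred_forall]
    exact isClosed_iInter fun m => isClosed_iInter fun j => isClosed_iInter fun _ =>
      (isClosed_discrete {q}ᶜ).preimage
        ((continuous_apply j).comp ((continuous_of_radius_one hH).iterate m))
  obtain ⟨b, hb⟩ := IsCompact.nonempty_iInter_of_sequence_nonempty_isCompact_isClosed C
    (fun n b hb m j hmj => hb m j (by omega)) hC_nonempty (hC_closed 0).isCompact hC_closed
  exact ⟨b, fun m i => mem_iInter.1 hb (m + i) m i le_rfl⟩

end RadiusOne

section Layers

variable {A B : Type*} {h : B × B → B} {H : (ℕ → B) → ℕ → B}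
  (hH : ∀ c i, H c i = h (c i, c (i + 1)))
include hH

section FstFixed

variable {𝓖 : (ℕ → A × B) → ℕ → A × B}
  (h𝓖 : ∀ c i, 𝓖 c i = ((c i).1, h ((c i).2, (c (i + 1)).2)))
include h𝓖

lemma iterate_apply_of_fst_fixed (m : ℕ) (c : ℕ → A × B) (i : ℕ) :
    𝓖^[m] c i = ((c i).1, H^[m] (Prod.snd ∘ c) i) := by
  induction m generalizing i with
  | zero => rfl
  | succ m ih => simp only [iterate_succ_apply', h𝓖, ih, hH]

lemma coverMincard_cylinderRel_le_of_fst_fixed [Fintype A] [Fintype B] (k n : ℕ) :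
    coverMincard 𝓖 univ (cylinderRel (A × B) k) n ≤
      (Fintype.card A ^ (k + 1) * Fintype.card B ^ k * Fintype.card B ^ n : ℕ) := by
  let π (c : ℕ → A × B) : (Fin (k + 1) → A) × (Fin (k + n) → B) :=
    (fun i => (c i).1, fun i => (c i).2)
  refine (coverMincard_le_card_of_fibers 𝓖 univ _ n π fun c c' hcc' => ?_).trans ?_
  · simp only [π, Prod.ext_iff, funext_iff, Fin.forall_iff] at hcc'
    refine mem_dynEntourage.2 fun m hm i hi => ?_
    simp only [iterate_apply_of_fst_fixed hH h𝓖]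
    rw [hcc'.1 i (by omega), iterate_apply_congr_of_radius_one hH (b := Prod.snd ∘ c)
      (b' := Prod.snd ∘ c') fun p _ hp => hcc'.2 p (by omega)]
  · simp [pow_add, mul_assoc]

lemma coverEntropy_le_log_card_of_fst_fixed [Fintype A] [UniformSpace A] [DiscreteTopology A]
    [Fintype B] [Nonempty B] [UniformSpace B] [DiscreteTopology B] :
    coverEntropy 𝓖 univ ≤ Real.log (Fintype.card B) := by
  rw [coverEntropy_eq_iSup_basis (hasBasis_uniformity_cylinderRel (A × B))]
  refine iSup₂_le fun k _ => ?_
  calc coverEntropyEntourage 𝓖 univ (cylinderRel (A × B) k)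
      ≤ ExpGrowth.expGrowthSup fun n => (Fintype.card B : ENNReal) ^ n := by
        refine ExpGrowth.expGrowthSup_le_of_eventually_le
          (b := Fintype.card A ^ (k + 1) * Fintype.card B ^ k)
          (by simp [ENNReal.mul_eq_top]) (.of_forall fun n => ?_)
        exact_mod_cast coverMincard_cylinderRel_le_of_fst_fixed hH h𝓖 k n
    _ = Real.log (Fintype.card B) := by
        rw [ExpGrowth.expGrowthSup_pow, ← ENNReal.ofReal_natCast,
          ENNReal.log_ofReal_of_pos (by exact_mod_cast Fintype.card_pos)]

end FstFixed

lemma coverEntropy_le_of_switch_of_forall_iterate_apply_ne [UniformSpace A] [UniformSpace B]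
    [DecidableEq B] {q : B} {f₀ : A × A → A} {F₀ : (ℕ → A) → ℕ → A}
    {𝓕 : (ℕ → A × B) → ℕ → A × B} (hF₀ : ∀ c i, F₀ c i = f₀ (c i, c (i + 1)))
    (h𝓕 : ∀ c i, 𝓕 c i =
      if h ((c i).2, (c (i + 1)).2) = q then ((c i).1, h ((c i).2, (c (i + 1)).2))
      else (f₀ ((c i).1, (c (i + 1)).1), h ((c i).2, (c (i + 1)).2)))
    {b : ℕ → B} (hb : ∀ m i, H^[m] b i ≠ q) :
    coverEntropy F₀ univ ≤ coverEntropy 𝓕 univ := by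
  let G : Set (ℕ → A × B) := {c | ∀ m i, H^[m] (Prod.snd ∘ c) i ≠ q}
  have hsnd (c : ℕ → A × B) : Prod.snd ∘ 𝓕 c = H (Prod.snd ∘ c) := by
    ext i
    rw [comp_apply, h𝓕, hH]
    split_ifs <;> rfl
  have hG : MapsTo 𝓕 G G := fun c hc m i => by
    rw [hsnd, ← iterate_succ_apply]
    exact hc (m + 1) i
  have hfst : ∀ c ∈ G, Prod.fst ∘ 𝓕 c = F₀ (Prod.fst ∘ c) := fun c hc => by
    ext i
    have hne : h ((c i).2, (c (i + 1)).2) ≠ q := by simpa [hH] using hc 1 i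
    rw [comp_apply, h𝓕, if_neg hne, hF₀]
    rfl
  have himage : (fun c : ℕ → A × B => Prod.fst ∘ c) '' G = univ :=
    eq_univ_of_forall fun a => ⟨fun i => (a i, b i), hb, rfl⟩
  calc coverEntropy F₀ univ
      = coverEntropy F₀ ((fun c : ℕ → A × B => Prod.fst ∘ c) '' G) := by rw [himage]
    _ ≤ coverEntropy 𝓕 G := coverEntropy_image_le_of_mapsTo hG
        (uniformContinuous_pi.2 fun i => uniformContinuous_fst.comp
          (Pi.uniformContinuous_proj _ i)) hfst
    _ ≤ coverEntropy 𝓕 univ := coverEntropy_monotone 𝓕 (subset_univ G)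

end Layers

theorem construction_entropy_gap_of_not_nilpotent_general
    {A B : Type} [DecidableEq B] [Fintype A] [UniformSpace A] [DiscreteTopology A]
    [Fintype B] [Nonempty B] [UniformSpace B] [DiscreteTopology B]
    (h : B × B → B) (q : B) (f₀ : A × A → A)
    (H : (ℕ → B) → ℕ → B) (F₀ : (ℕ → A) → ℕ → A)
    (hH : ∀ c i, H c i = h (c i, c (i + 1)))
    (hF₀ : ∀ c i, F₀ c i = f₀ (c i, c (i + 1)))
    -- `q` is a spreading state for `H`
    (hspread : ∀ b b' : B, b = q ∨ b' = q → h (b, b') = q)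
    -- `H` is NOT nilpotent
    (hnotnilp : ¬ ∃ q' : B, H (fun _ => q') = (fun _ => q') ∧ ∀ c, ∃ n, H^[n] c = fun _ => q')
    -- `F₀` has topological entropy greater than `log₂ |B|` (in base-2), i.e. greater than
    -- `log |B|` in natural-logarithm units
    (hent : (Real.log (Fintype.card B) : EReal) < Dynamics.coverEntropy F₀ Set.univ)
    -- the CA `𝓕` and `𝓖` of the construction
    (𝓕 𝓖 : (ℕ → A × B) → ℕ → A × B)
    (h𝓖 : ∀ c i, 𝓖 c i = ((c i).1, h ((c i).2, (c (i + 1)).2)))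
    (h𝓕 : ∀ c i, 𝓕 c i =
      if h ((c i).2, (c (i + 1)).2) = q then ((c i).1, h ((c i).2, (c (i + 1)).2))
      else (f₀ ((c i).1, (c (i + 1)).1), h ((c i).2, (c (i + 1)).2))) :
    Dynamics.coverEntropy 𝓖 Set.univ < Dynamics.coverEntropy 𝓕 Set.univ := by
  obtain ⟨b, hb⟩ := exists_forall_iterate_apply_ne hH hspread hnotnilp
  calc coverEntropy 𝓖 univ
      ≤ Real.log (Fintype.card B) := coverEntropy_le_log_card_of_fst_fixed hH h𝓖
    _ < coverEntropy F₀ univ := hent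
    _ ≤ coverEntropy 𝓕 univ := coverEntropy_le_of_switch_of_forall_iterate_apply_ne hH hF₀ h𝓕 hb

/-- If `H` is a non-nilpotent radius-1 one-sided CA over `B` with spreading state `q`, and `F₀`
is a radius-1 one-sided CA over `A` whose topological entropy exceeds `log |B|` (base-2 entropy
exceeding `log₂ |B|`, stated here in natural-logarithm units), then the CA `𝓕` and `𝓖` over
`A × B` of the construction satisfy `h(𝓕) > h(𝓖)`. -/
theorem construction_entropy_gap_of_not_nilpotent
    {A B : Type} [DecidableEq B] [Fintype A] [Nonempty A] [UniformSpace A] [DiscreteTopology A]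
    [Fintype B] [Nonempty B] [UniformSpace B] [DiscreteTopology B]
    (h : B × B → B) (q : B) (f₀ : A × A → A)
    (H : (ℕ → B) → ℕ → B) (F₀ : (ℕ → A) → ℕ → A)
    (hH : ∀ c i, H c i = h (c i, c (i + 1)))
    (hF₀ : ∀ c i, F₀ c i = f₀ (c i, c (i + 1)))
    -- `q` is a spreading state for `H`
    (hspread : ∀ b b' : B, b = q ∨ b' = q → h (b, b') = q)
    -- `H` is NOT nilpotent
    (hnotnilp : ¬ ∃ q' : B, H (fun _ => q') = (fun _ => q') ∧ ∀ c, ∃ n, H^[n] c = fun _ => q')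
    -- `F₀` has topological entropy greater than `log₂ |B|` (in base-2), i.e. greater than
    -- `log |B|` in natural-logarithm units
    (hent : (Real.log (Fintype.card B) : EReal) < Dynamics.coverEntropy F₀ Set.univ)
    -- the CA `𝓕` and `𝓖` of the construction
    (𝓕 𝓖 : (ℕ → A × B) → ℕ → A × B)
    (h𝓖 : ∀ c i, 𝓖 c i = ((c i).1, h ((c i).2, (c (i + 1)).2)))
    (h𝓕 : ∀ c i, 𝓕 c i =
      if h ((c i).2, (c (i + 1)).2) = q then ((c i).1, h ((c i).2, (c (i + 1)).2))
      else (f₀ ((c i).1, (c (i + 1)).1), h ((c i).2, (c (i + 1)).2))) :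
    Dynamics.coverEntropy 𝓖 Set.univ < Dynamics.coverEntropy 𝓕 Set.univ :=
  construction_entropy_gap_of_not_nilpotent_general h q f₀ H F₀ hH hF₀ hspread hnotnilp hent 𝓕 𝓖 h𝓖
    h𝓕
end

section
/- Let F be a one-sided CA over a finite alphabet A of radius r, let s ∈ A be a spreading state for F, and suppose F is not nilpotent. Then there exists a configuration c : ℕ → A such that F^n(c)(j) ≠ s for all n ∈ ℕ and all j ∈ ℕ. -/
namespace CellularAutomaton

variable {A : Type*} {r : ℕ} {f : (Fin (r + 1) → A) → A} {F : (ℕ → A) → ℕ → A}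

theorem continuous_of_local_rule [TopologicalSpace A] [DiscreteTopology A]
    (hF : ∀ c i, F c i = f fun k => c (i + (k : ℕ))) : Continuous F := by
  rw [show F = fun c i => f fun k => c (i + (k : ℕ)) from funext₂ hF]
  exact continuous_pi fun i =>
    continuous_of_discreteTopology.comp (continuous_pi fun k => continuous_apply _)

theorem iterate_apply_eq_of_forall_window_eq (hF : ∀ c i, F c i = f fun k => c (i + (k : ℕ))) :
    ∀ {m : ℕ} {d d' : ℕ → A} {i i' : ℕ},
      (∀ t ≤ m * r, d (i + t) = d' (i' + t)) → F^[m] d i = F^[m] d' i'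
  | 0, _, _, _, _, h => by simpa using h 0 (Nat.zero_le _)
  | m + 1, d, d', i, i', h => by
    rw [Function.iterate_succ_apply, Function.iterate_succ_apply]
    refine iterate_apply_eq_of_forall_window_eq hF fun t ht => ?_
    rw [hF, hF]
    congr 1
    funext k
    simpa only [add_assoc] using h (t + k) (by rw [Nat.succ_mul]; omega)

theorem apply_eq_of_apply_eq (hF : ∀ c i, F c i = f fun k => c (i + (k : ℕ))) {s : A}
    (hs : ∀ u : Fin (r + 1) → A, (∃ k, u k = s) → f u = s) {d : ℕ → A} {i k : ℕ} (hk : k ≤ r)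
    (hd : d (i + k) = s) : F d i = s := by
  rw [hF]
  exact hs _ ⟨⟨k, Nat.lt_succ_of_le hk⟩, hd⟩

theorem map_const_eq (hF : ∀ c i, F c i = f fun k => c (i + (k : ℕ))) {s : A}
    (hs : ∀ u : Fin (r + 1) → A, (∃ k, u k = s) → f u = s) : F (fun _ => s) = fun _ => s :=
  funext fun _ => apply_eq_of_apply_eq hF hs (k := 0) (Nat.zero_le r) rfl

theorem iterate_apply_ne_of_iterate_add_apply_ne
    (hF : ∀ c i, F c i = f fun k => c (i + (k : ℕ))) {s : A}
    (hs : ∀ u : Fin (r + 1) → A, (∃ k, u k = s) → f u = s) {d : ℕ → A} {j : ℕ} :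
    ∀ {k m t : ℕ}, t ≤ k * r → F^[m + k] d j ≠ s → F^[m] d (j + t) ≠ s
  | 0, m, t, ht, h => by
    obtain rfl : t = 0 := by simpa using ht
    simpa using h
  | k + 1, m, t, ht, h => by
    have hmid : F^[m + 1] d (j + min t (k * r)) ≠ s :=
      iterate_apply_ne_of_iterate_add_apply_ne hF hs (min_le_right _ _)
        (by rwa [Nat.add_right_comm, Nat.add_assoc])
    rw [Function.iterate_succ_apply'] at hmid
    have hstep : t - min t (k * r) ≤ r := by rw [Nat.succ_mul] at ht; omega
    have hcell := mt (apply_eq_of_apply_eq hF hs hstep) hmid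
    rwa [Nat.add_assoc, Nat.add_sub_cancel' (min_le_left _ _)] at hcell

theorem exists_forall_square_iterate_apply_ne
    (hF : ∀ c i, F c i = f fun k => c (i + (k : ℕ))) {s : A}
    (hs : ∀ u : Fin (r + 1) → A, (∃ k, u k = s) → f u = s) {c : ℕ → A}
    (hc : ∀ n, ∃ j, F^[n] c j ≠ s) (n : ℕ) :
    ∃ d : ℕ → A, ∀ m ≤ n, ∀ i ≤ n, F^[m] d i ≠ s := by
  rcases Nat.eq_zero_or_pos r with rfl | hr
  · obtain ⟨j, hj⟩ := hc n
    refine ⟨fun _ => c j, fun m hm i _ => ?_⟩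
    rw [iterate_apply_eq_of_forall_window_eq hF (d' := c) (i' := j) fun t ht => by
      obtain rfl : t = 0 := by simpa using ht
      rfl]
    simpa using iterate_apply_ne_of_iterate_add_apply_ne hF hs (k := n - m) (t := 0)
      (Nat.zero_le _) (by rwa [Nat.add_sub_cancel' hm])
  · obtain ⟨j, hj⟩ := hc (2 * n)
    refine ⟨fun t => c (j + t), fun m hm i hi => ?_⟩
    rw [iterate_apply_eq_of_forall_window_eq hF (d' := c) (i' := j + i) fun t _ => by
      simp only [Nat.add_assoc]]
    refine iterate_apply_ne_of_iterate_add_apply_ne hF hs (k := 2 * n - m) ?_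
      (by rwa [Nat.add_sub_cancel' (by omega)])
    calc i ≤ (2 * n - m) * 1 := by omega
      _ ≤ (2 * n - m) * r := Nat.mul_le_mul_left _ hr

theorem exists_forall_iterate_apply_ne_of_forall_square [TopologicalSpace A]
    [DiscreteTopology A] [Finite A] (hF : Continuous F) {s : A}
    (h : ∀ n, ∃ d, ∀ m ≤ n, ∀ i ≤ n, F^[m] d i ≠ s) : ∃ c, ∀ m i, F^[m] c i ≠ s := by
  set square : ℕ → Set (ℕ → A) := fun n => {d | ∀ m ≤ n, ∀ i ≤ n, F^[m] d i ≠ s}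
  have hclosed : ∀ n, IsClosed (square n) := fun n => by
    simp only [square, Set.ofPred_forall]
    exact isClosed_iInter fun m => isClosed_iInter fun _ => isClosed_iInter fun i =>
      isClosed_iInter fun _ =>
        (isClosed_discrete {s}ᶜ).preimage ((continuous_apply i).comp (hF.iterate m))
  obtain ⟨c, hc⟩ := IsCompact.nonempty_iInter_of_sequence_nonempty_isCompact_isClosed square
    (fun n d hd m hm i hi => hd m (hm.trans n.le_succ) i (hi.trans n.le_succ)) h
    (hclosed 0).isCompact hclosed
  rw [Set.mem_iInter] at hc
  exact ⟨c, fun m i => hc (max m i) m (le_max_left _ _) i (le_max_right _ _)⟩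

end CellularAutomaton

open CellularAutomaton

theorem exists_orbit_avoiding_spreading_state_of_not_nilpotent_general
    {A : Type} [Fintype A] {r : ℕ}
    (f : (Fin (r + 1) → A) → A) (F : (ℕ → A) → ℕ → A)
    (hF : ∀ c i, F c i = f fun k => c (i + (k : ℕ)))
    (s : A)
    -- `s` is a spreading state: the local rule maps every neighborhood containing `s` to `s`
    (hs : ∀ u : Fin (r + 1) → A, (∃ k, u k = s) → f u = s)
    -- `F` is not nilpotent
    (hnotnilp : ¬ ∃ q : A, F (fun _ => q) = (fun _ => q) ∧ ∀ c, ∃ n, F^[n] c = fun _ => q) :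
    ∃ c : ℕ → A, ∀ n j : ℕ, F^[n] c j ≠ s := by
  let : TopologicalSpace A := ⊥
  have : DiscreteTopology A := ⟨rfl⟩
  obtain ⟨c, hc⟩ : ∃ c, ∀ n, ∃ j, F^[n] c j ≠ s := by
    by_contra! h
    exact hnotnilp ⟨s, map_const_eq hF hs, fun c => (h c).imp fun _ hn => funext hn⟩
  exact exists_forall_iterate_apply_ne_of_forall_square (continuous_of_local_rule hF)
    (exists_forall_square_iterate_apply_ne hF hs hc)

/-- If `F` is a radius-`r` one-sided CA over a finite alphabet with a spreading state `s`, and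
`F` is not nilpotent, then some configuration `c` avoids `s` in its whole orbit:
`F^n(c)(j) ≠ s` for all `n` and `j`. -/
theorem exists_orbit_avoiding_spreading_state_of_not_nilpotent
    {A : Type} [Fintype A] [Nonempty A] {r : ℕ}
    (f : (Fin (r + 1) → A) → A) (F : (ℕ → A) → ℕ → A)
    (hF : ∀ c i, F c i = f fun k => c (i + (k : ℕ)))
    (s : A)
    -- `s` is a spreading state: the local rule maps every neighborhood containing `s` to `s`
    (hs : ∀ u : Fin (r + 1) → A, (∃ k, u k = s) → f u = s)
    -- `F` is not nilpotent
    (hnotnilp : ¬ ∃ q : A, F (fun _ => q) = (fun _ => q) ∧ ∀ c, ∃ n, F^[n] c = fun _ => q) :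
    ∃ c : ℕ → A, ∀ n j : ℕ, F^[n] c j ≠ s :=
  exists_orbit_avoiding_spreading_state_of_not_nilpotent_general f F hF s hs hnotnilp
end

section
/- Let F be a one-sided CA over a finite alphabet A. Then the sequence n ↦ h(τ_n(F), σ) of topological entropies of the trace subshifts is nondecreasing, and h((ℕ → A), F) = sup_{n ≥ 1} h(τ_n(F), σ) (equivalently, the limit of h(τ_n(F), σ) as n → ∞). -/
/-- The `n`-th trace subshift of `F`: the set of sequences of width-`n` windows
`i ↦ (F^i(c)(0), …, F^i(c)(n-1))` read off orbits of `F`. -/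
def traceSubshift {A : Type*} (F : (ℕ → A) → ℕ → A) (n : ℕ) : Set (ℕ → (Fin n → A)) :=
  { t | ∃ c : ℕ → A, ∀ (i : ℕ) (k : Fin n), t i k = F^[i] c (k : ℕ) }

open Dynamics Filter Function Set Uniformity
open scoped SetRel

lemma SetRel.id_mem_uniformity {B : Type*} [Finite B] [UniformSpace B] [DiscreteTopology B] :
    (SetRel.id : SetRel B B) ∈ 𝓤 B :=
  nhdsSet_diagonal_eq_uniformity (α := B) ▸ (isOpen_discrete _).mem_nhdsSet.2 subset_rfl

lemma exists_cylinder_subset_of_mem_uniformity {A : Type*} [UniformSpace A]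
    {U : Set ((ℕ → A) × (ℕ → A))} (hU : U ∈ 𝓤 (ℕ → A)) :
    ∃ n : ℕ, {p : (ℕ → A) × (ℕ → A) | ∀ k < n, p.1 k = p.2 k} ⊆ U := by
  rw [Pi.uniformity, mem_iInf] at hU
  obtain ⟨I, hI, V, hV, rfl⟩ := hU
  choose W hW hWV using fun i : I => mem_comap.1 (hV i)
  obtain ⟨b, hb⟩ := hI.bddAbove
  refine ⟨b + 1, fun p hp => mem_iInter.2 fun i => hWV i ?_⟩
  change (p.1 i, p.2 i) ∈ W i
  rw [hp i (Nat.lt_succ_of_le (hb i.2))]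
  exact refl_mem_uniformity (hW i)

lemma mem_uniformity_eq_at_zero {B : Type*} [Finite B] [UniformSpace B] [DiscreteTopology B] :
    {q : (ℕ → B) × (ℕ → B) | q.1 0 = q.2 0} ∈ 𝓤 (ℕ → B) := by
  rw [Pi.uniformity]
  exact mem_iInf_of_mem 0 (mem_comap.2 ⟨SetRel.id, SetRel.id_mem_uniformity, fun _ h => h⟩)

section Trace

variable {A : Type*} (F : (ℕ → A) → ℕ → A)

def traceMap (n : ℕ) (c : ℕ → A) : ℕ → Fin n → A :=
  fun i k => F^[i] c k

lemma traceMap_semiconj (n : ℕ) : Semiconj (traceMap F n) F shift := by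
  intro c
  funext i k
  simp [traceMap, shift, iterate_succ_apply]

lemma range_traceMap (n : ℕ) : range (traceMap F n) = traceSubshift F n := by
  ext t
  constructor
  · rintro ⟨c, rfl⟩
    exact ⟨c, fun _ _ => rfl⟩
  · rintro ⟨c, hc⟩
    exact ⟨c, funext fun i => funext fun k => (hc i k).symm⟩

lemma uniformContinuous_traceMap [UniformSpace A] [CompactSpace A] (hF : Continuous F) (n : ℕ) :
    UniformContinuous (traceMap F n) :=
  CompactSpace.uniformContinuous_of_continuous <| continuous_pi fun i => continuous_pi fun k =>
    (continuous_apply (k : ℕ)).comp (hF.iterate i)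

def restrictWidth {m n : ℕ} (h : m ≤ n) (t : ℕ → Fin n → A) : ℕ → Fin m → A :=
  fun i k => t i (Fin.castLE h k)

lemma semiconj_restrictWidth {m n : ℕ} (h : m ≤ n) :
    Semiconj (restrictWidth (A := A) h) shift shift :=
  fun _ => rfl

lemma uniformContinuous_restrictWidth [UniformSpace A] {m n : ℕ} (h : m ≤ n) :
    UniformContinuous (restrictWidth (A := A) h) :=
  Pi.uniformContinuous_postcomp (Pi.uniformContinuous_precomp (Fin.castLE h))

lemma traceSubshift_eq_image_restrictWidth {m n : ℕ} (h : m ≤ n) :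
    traceSubshift F m = restrictWidth h '' traceSubshift F n := by
  rw [← range_traceMap, ← range_traceMap, ← range_comp]
  rfl

lemma coverEntropy_traceSubshift_mono [UniformSpace A] {m n : ℕ} (h : m ≤ n) :
    coverEntropy shift (traceSubshift F m) ≤ coverEntropy shift (traceSubshift F n) := by
  rw [traceSubshift_eq_image_restrictWidth F h]
  exact coverEntropy_image_le_of_uniformContinuous (semiconj_restrictWidth h)
    (uniformContinuous_restrictWidth h) _

lemma coverEntropy_traceSubshift_le [UniformSpace A] [CompactSpace A] (hF : Continuous F)
    (n : ℕ) : coverEntropy shift (traceSubshift F n) ≤ coverEntropy F univ := by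
  rw [← range_traceMap, ← image_univ]
  exact coverEntropy_image_le_of_uniformContinuous (traceMap_semiconj F n)
    (uniformContinuous_traceMap F hF n) univ

lemma coverEntropyEntourage_le_coverEntropy_traceSubshift [Finite A] [UniformSpace A]
    [DiscreteTopology A] {U : Set ((ℕ → A) × (ℕ → A))} {n : ℕ}
    (hU : {p : (ℕ → A) × (ℕ → A) | ∀ k < n, p.1 k = p.2 k} ⊆ U) :
    coverEntropyEntourage F univ U ≤ coverEntropy shift (traceSubshift F n) := by
  set W : SetRel (ℕ → Fin n → A) (ℕ → Fin n → A) := {q | q.1 0 = q.2 0}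
  have : W.IsSymm := ⟨fun _ _ h => h.symm⟩
  have hWW : ∀ {t u}, (t, u) ∈ W ○ W → t 0 = u 0 := fun ⟨_, h₁, h₂⟩ => h₁.trans h₂
  have hpull : Prod.map (traceMap F n) (traceMap F n) ⁻¹' (W ○ W) ⊆ U :=
    fun p hp => hU fun k hk =>
      congrFun (hWW (t := traceMap F n p.1) (u := traceMap F n p.2) hp) ⟨k, hk⟩
  calc coverEntropyEntourage F univ U
      ≤ coverEntropyEntourage F univ (Prod.map (traceMap F n) (traceMap F n) ⁻¹' (W ○ W)) :=
        coverEntropyEntourage_antitone F univ hpull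
    _ ≤ coverEntropyEntourage shift (traceMap F n '' univ) W :=
        le_coverEntropyEntourage_image (traceMap_semiconj F n) univ
    _ ≤ coverEntropy shift (traceSubshift F n) := by
        rw [image_univ, range_traceMap]
        exact coverEntropyEntourage_le_coverEntropy _ _ mem_uniformity_eq_at_zero

lemma coverEntropy_le_iSup_coverEntropy_traceSubshift [Finite A] [UniformSpace A]
    [DiscreteTopology A] :
    coverEntropy F univ ≤ ⨆ n : ℕ, coverEntropy shift (traceSubshift F (n + 1)) := by
  refine iSup₂_le fun U hU => ?_
  obtain ⟨n, hn⟩ := exists_cylinder_subset_of_mem_uniformity hU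
  exact le_iSup_of_le n <| (coverEntropyEntourage_le_coverEntropy_traceSubshift F hn).trans
    (coverEntropy_traceSubshift_mono F n.le_succ)

end Trace

theorem entropy_eq_iSup_trace_entropies_general
    {A : Type} [Fintype A] [UniformSpace A] [DiscreteTopology A]
    (F : (ℕ → A) → ℕ → A) (hcont : Continuous F) :
    (∀ n : ℕ, 1 ≤ n →
      Dynamics.coverEntropy (shift (A := Fin n → A)) (traceSubshift F n) ≤
        Dynamics.coverEntropy (shift (A := Fin (n + 1) → A)) (traceSubshift F (n + 1))) ∧
    Dynamics.coverEntropy F Set.univ =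
      ⨆ n : ℕ, Dynamics.coverEntropy (shift (A := Fin (n + 1) → A)) (traceSubshift F (n + 1)) :=
  ⟨fun n _ => coverEntropy_traceSubshift_mono F n.le_succ,
    (coverEntropy_le_iSup_coverEntropy_traceSubshift F).antisymm
      (iSup_le fun n => coverEntropy_traceSubshift_le F hcont (n + 1))⟩

/-- For a one-sided CA `F` over a finite alphabet, the entropies of the trace subshifts are
nondecreasing in the width, and the topological entropy of `F` is their supremum (equivalently,
their limit). -/
theorem entropy_eq_iSup_trace_entropies
    {A : Type} [Fintype A] [Nonempty A] [UniformSpace A] [DiscreteTopology A]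
    (F : (ℕ → A) → ℕ → A) (hcont : Continuous F) (hshift : F ∘ shift = shift ∘ F) :
    (∀ n : ℕ, 1 ≤ n →
      Dynamics.coverEntropy (shift (A := Fin n → A)) (traceSubshift F n) ≤
        Dynamics.coverEntropy (shift (A := Fin (n + 1) → A)) (traceSubshift F (n + 1))) ∧
    Dynamics.coverEntropy F Set.univ =
      ⨆ n : ℕ, Dynamics.coverEntropy (shift (A := Fin (n + 1) → A)) (traceSubshift F (n + 1)) :=
  entropy_eq_iSup_trace_entropies_general F hcont
end

section
/- Let F be an injective one-sided CA over a finite alphabet A of radius 1 with local rule f : A × A → A (so F(c)(i) = f(c(i), c(i+1))). Then for every fixed a ∈ A, the map ρ_a : A → A defined by ρ_a(x) = f(x, a) is a bijection (a permutation of A). -/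
theorem rightNeighbor_map_injective_of_injective {A : Type*}
    (f : A × A → A) (F : (ℕ → A) → ℕ → A)
    (hF : ∀ c i, F c i = f (c i, c (i + 1)))
    (hinj : Function.Injective F) (a : A) :
    Function.Injective fun x => f (x, a) := by
  intro x y hxy
  let padded : A → ℕ → A := fun x i => if i = 0 then x else a
  have hpadded : F (padded x) = F (padded y) := by
    funext i
    rcases i with _ | i
    · simpa [hF, padded] using hxy
    · simp [hF, padded]
  simpa [padded] using congrFun (hinj hpadded) 0

theorem rightNeighbor_maps_bijective_of_injective_general
    {A : Type} [Fintype A]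
    (f : A × A → A) (F : (ℕ → A) → ℕ → A)
    (hF : ∀ c i, F c i = f (c i, c (i + 1)))
    (hinj : Function.Injective F) :
    ∀ a : A, Function.Bijective fun x => f (x, a) := fun a =>
  Finite.injective_iff_bijective.mp (rightNeighbor_map_injective_of_injective f F hF hinj a)

/-- If the radius-1 one-sided CA `F` with local rule `f` over a finite alphabet is injective,
then for every fixed right neighbor `a` the map `x ↦ f(x, a)` is a permutation of the
alphabet. -/
theorem rightNeighbor_maps_bijective_of_injective
    {A : Type} [Fintype A] [Nonempty A]
    (f : A × A → A) (F : (ℕ → A) → ℕ → A)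
    (hF : ∀ c i, F c i = f (c i, c (i + 1)))
    (hinj : Function.Injective F) :
    ∀ a : A, Function.Bijective fun x => f (x, a) :=
  rightNeighbor_maps_bijective_of_injective_general f F hF hinj
end

section
/- Let A = Fin 3 with elements 0, 1, 2, and let F be the radius-1 one-sided CA over A with F(c)(i) = ρ_{c(i+1)}(c(i)), where ρ₀ = ρ₂ swaps 1 and 2 (fixing 0) and ρ₁ is the 3-cycle 0↦1, 1↦2, 2↦0. Identify the first trace subshift τ₁(F) with a subset of A^ℕ (i.e., τ₁(F) = { t : ℕ → A | ∃ c, ∀ i, t(i) = F^i(c)(0) }). Then τ₁(F) consists exactly of those t ∈ A^ℕ such that either (∀ i, (t(2i), t(2i+1)) ∈ {(0,0), (1,2)}), or (t(0) ∈ {0, 2} and ∀ i, (t(2i+1), t(2i+2)) ∈ {(0,0), (1,2)}); that is, τ₁(F) is the set of one-sided sequences obtained as (suffixes of) infinite concatenations of the blocks 00 and 12. -/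
/-- The permutations `ρ₀ = ρ₂ = (0)(12)` and `ρ₁ = (012)` (i.e. `0↦1, 1↦2, 2↦0`),
as a family indexed by the right neighbor: `rho b x = ρ_b(x)`. -/
def rho : Fin 3 → Fin 3 → Fin 3 := ![![0, 2, 1], ![1, 2, 0], ![0, 2, 1]]

/-- The radius-1 one-sided CA `F(c)(i) = ρ_{c(i+1)}(c(i))` of the example. -/
def Fex : (ℕ → Fin 3) → ℕ → Fin 3 := fun c i => rho (c (i + 1)) (c i)

/-- The first trace subshift of `F`, identified with a subset of `(Fin 3)^ℕ`. -/
def trace1 (F : (ℕ → Fin 3) → ℕ → Fin 3) : Set (ℕ → Fin 3) :=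
  { t | ∃ c : ℕ → Fin 3, ∀ i : ℕ, t i = F^[i] c 0 }

/-!
Write `x k n` for the state of cell `k` at time `n`. Since `ρ_b(a) = 2` iff `a = 1`, in every column
of a space-time diagram each `1` is followed by a `2` and each `2` is preceded by a `1`. Let a column
have `2`s at times `m` and `m + d`. Unless it also has a `2` at time `m + 2` or `m + d - 2`, it reads
`2 0` at times `m, m + 1` and `0 1` at times `m + d - 2, m + d - 1`; both transitions require a `1`
in the column to the right, which therefore has `2`s at times `m + 1` and `m + d - 1`. By induction
on `d`, two `2`s of a column are an even distance apart.

Conversely, for a sequence `t` with these properties, the column that is `1` exactly where `t` does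
not follow `ρ₀ = ρ₂`, and `2` right after such a time, drives `t` and has the same properties, so
iterating it builds a space-time diagram above `t`. The sequences with these properties are exactly
the concatenations of the blocks `00` and `12`.
-/

/-- `t` and `s` can be the columns of cells `k` and `k + 1` of a space-time diagram of the CA with
local rule `f`. -/
def Drives (f : Fin 3 → Fin 3 → Fin 3) (s t : ℕ → Fin 3) : Prop :=
  ∀ n, t (n + 1) = f (s n) (t n)

theorem mem_trace1_iff (f : Fin 3 → Fin 3 → Fin 3) (t : ℕ → Fin 3) :
    t ∈ trace1 (fun c i => f (c (i + 1)) (c i)) ↔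
      ∃ x : ℕ → ℕ → Fin 3, x 0 = t ∧ ∀ k, Drives f (x (k + 1)) (x k) := by
  set F : (ℕ → Fin 3) → ℕ → Fin 3 := fun c i => f (c (i + 1)) (c i)
  constructor
  · rintro ⟨c, hc⟩
    refine ⟨fun k n => F^[n] c k, funext fun n => (hc n).symm, fun k n => ?_⟩
    simp only [Function.iterate_succ_apply', F]
  · rintro ⟨x, rfl, hx⟩
    have hcol : ∀ n k, F^[n] (fun k => x k 0) k = x k n := by
      intro n
      induction n with
      | zero => exact fun _ => rfl
      | succ n ih => intro k; rw [Function.iterate_succ_apply', hx k n, ← ih, ← ih]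
    exact ⟨fun k => x k 0, fun n => (hcol n 0).symm⟩

theorem Fin.eq_zero_or_eq_one_or_eq_two (a : Fin 3) : a = 0 ∨ a = 1 ∨ a = 2 := by omega

theorem rho_eq_two_iff : ∀ b a : Fin 3, rho b a = 2 ↔ a = 1 := by decide

theorem rho_two_eq_zero_iff : ∀ b : Fin 3, rho b 2 = 0 ↔ b = 1 := by decide

theorem rho_zero_eq_one_iff : ∀ b : Fin 3, rho b 0 = 1 ↔ b = 1 := by decide

theorem rho_of_ne_one : ∀ b : Fin 3, b ≠ 1 → rho b = rho 0 := by decide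

theorem Drives.eq_one_iff_succ_eq_two {s t : ℕ → Fin 3} (h : Drives rho s t) (n : ℕ) :
    t n = 1 ↔ t (n + 1) = 2 := by
  rw [h n, rho_eq_two_iff]

theorem even_of_eq_two_of_eq_two {x : ℕ → ℕ → Fin 3} (hx : ∀ k, Drives rho (x (k + 1)) (x k))
    (d : ℕ) : ∀ k m, x k m = 2 → x k (m + d) = 2 → Even d := by
  induction d using Nat.twoStepInduction with
  | zero => exact fun _ _ _ _ => Even.zero
  | one =>
    intro k m hm hm1
    simp [(hx k).eq_one_iff_succ_eq_two m |>.2 hm1] at hm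
  | more d ih _ =>
    intro k m hm hmd
    suffices Even d from this.add even_two
    have hpre : x k (m + d + 1) = 1 := ((hx k).eq_one_iff_succ_eq_two _).2 hmd
    rcases Fin.eq_zero_or_eq_one_or_eq_two (x k (m + 1)) with h0 | h1 | h2
    · have hright : x (k + 1) (m + 1) = 2 := by
        rw [← (hx (k + 1)).eq_one_iff_succ_eq_two, ← rho_two_eq_zero_iff, ← hm, ← hx k m, h0]
      rcases Fin.eq_zero_or_eq_one_or_eq_two (x k (m + d)) with h0' | h1' | h2'
      · have hright' : x (k + 1) (m + d + 1) = 2 := by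
          rw [← (hx (k + 1)).eq_one_iff_succ_eq_two, ← rho_zero_eq_one_iff, ← h0', ← hx k, hpre]
        exact ih (k + 1) (m + 1) hright (by rwa [add_right_comm])
      · simp [(hx k).eq_one_iff_succ_eq_two _ |>.1 h1'] at hpre
      · exact ih k m hm h2'
    · have h2 : x k (m + 2) = 2 := ((hx k).eq_one_iff_succ_eq_two _).1 h1
      exact ih k (m + 2) h2 (by rwa [add_right_comm])
    · simp [(hx k).eq_one_iff_succ_eq_two m |>.2 h2] at hm

structure Admissible (t : ℕ → Fin 3) : Prop where
  eq_one_iff_succ_eq_two : ∀ n, t n = 1 ↔ t (n + 1) = 2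
  even_add_of_eq_two : ∀ m n, t m = 2 → t n = 2 → Even (m + n)

theorem admissible_of_diagram {x : ℕ → ℕ → Fin 3} (hx : ∀ k, Drives rho (x (k + 1)) (x k)) :
    Admissible (x 0) where
  eq_one_iff_succ_eq_two := (hx 0).eq_one_iff_succ_eq_two
  even_add_of_eq_two m n hm hn := by
    wlog hmn : m ≤ n generalizing m n
    · rw [add_comm]
      exact this n m hn hm (by omega)
    obtain ⟨d, rfl⟩ := Nat.exists_eq_add_of_le hmn
    rw [← add_assoc, ← two_mul]
    exact (even_two_mul m).add (even_of_eq_two_of_eq_two hx d 0 m hm hn)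

/-- The transition of `t` at time `n` is not that of `ρ₀ = ρ₂`, so a column driving `t` is `1` at
time `n`. -/
def NeedsOne (t : ℕ → Fin 3) (n : ℕ) : Prop :=
  t (n + 1) ≠ rho 0 (t n)

instance (t : ℕ → Fin 3) : DecidablePred (NeedsOne t) :=
  fun n => inferInstanceAs (Decidable (t (n + 1) ≠ rho 0 (t n)))

def neighbor (t : ℕ → Fin 3) : ℕ → Fin 3
  | 0 => if NeedsOne t 0 then 1 else 0
  | n + 1 => if NeedsOne t (n + 1) then 1 else if NeedsOne t n then 2 else 0

theorem neighbor_eq_one_iff (t : ℕ → Fin 3) (n : ℕ) : neighbor t n = 1 ↔ NeedsOne t n := by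
  cases n <;> simp only [neighbor] <;> split_ifs <;> simp_all

theorem neighbor_succ_eq_two_iff (t : ℕ → Fin 3) (n : ℕ) :
    neighbor t (n + 1) = 2 ↔ NeedsOne t n ∧ ¬NeedsOne t (n + 1) := by
  simp only [neighbor]
  split_ifs <;> simp_all

theorem neighbor_zero_ne_two (t : ℕ → Fin 3) : neighbor t 0 ≠ 2 := by
  simp only [neighbor]
  split_ifs <;> decide

namespace Admissible

variable {t : ℕ → Fin 3}

theorem eq_two_or_eq_two_of_needsOne (ht : Admissible t) {n : ℕ} (hn : NeedsOne t n) :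
    t n = 2 ∨ t (n + 2) = 2 := by
  have key : t n = 2 ∨ t (n + 1) = 1 := by
    have h := ht.eq_one_iff_succ_eq_two n
    revert hn h
    simp only [NeedsOne]
    generalize t n = a, t (n + 1) = b
    revert a b
    decide
  exact key.imp_right (ht.eq_one_iff_succ_eq_two (n + 1)).1

theorem even_add_of_needsOne (ht : Admissible t) {m n : ℕ} (hm : NeedsOne t m)
    (hn : NeedsOne t n) : Even (m + n) := by
  rcases ht.eq_two_or_eq_two_of_needsOne hm with hm | hm <;>
  rcases ht.eq_two_or_eq_two_of_needsOne hn with hn | hn <;>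
  simpa [parity_simps] using ht.even_add_of_eq_two _ _ hm hn

theorem drives_neighbor (ht : Admissible t) : Drives rho (neighbor t) t := by
  intro n
  by_cases hn : NeedsOne t n
  · rw [(neighbor_eq_one_iff t n).2 hn]
    have h := ht.eq_one_iff_succ_eq_two n
    revert hn h
    simp only [NeedsOne]
    generalize t n = a, t (n + 1) = b
    revert a b
    decide
  · rw [rho_of_ne_one _ (mt (neighbor_eq_one_iff t n).1 hn)]
    exact not_not.1 hn

theorem neighbor (ht : Admissible t) : Admissible (neighbor t) where
  eq_one_iff_succ_eq_two n := by
    rw [neighbor_eq_one_iff, neighbor_succ_eq_two_iff, iff_self_and]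
    intro hn hn'
    obtain ⟨r, hr⟩ := ht.even_add_of_needsOne hn hn'
    omega
  even_add_of_eq_two m n hm hn := by
    cases m with
    | zero => exact absurd hm (neighbor_zero_ne_two t)
    | succ m =>
    cases n with
    | zero => exact absurd hn (neighbor_zero_ne_two t)
    | succ n =>
    obtain ⟨r, hr⟩ := ht.even_add_of_needsOne
      ((neighbor_succ_eq_two_iff t m).1 hm).1 ((neighbor_succ_eq_two_iff t n).1 hn).1
    exact ⟨r + 1, by omega⟩

theorem exists_diagram (ht : Admissible t) :
    ∃ x : ℕ → ℕ → Fin 3, x 0 = t ∧ ∀ k, Drives rho (x (k + 1)) (x k) := by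
  have hiter : ∀ k, Admissible (_root_.neighbor^[k] t) := by
    intro k
    induction k with
    | zero => exact ht
    | succ k ih => rw [Function.iterate_succ_apply']; exact ih.neighbor
  refine ⟨fun k => _root_.neighbor^[k] t, rfl, fun k => ?_⟩
  simpa only [Function.iterate_succ_apply'] using (hiter k).drives_neighbor

end Admissible

def IsBlockAt (t : ℕ → Fin 3) (j : ℕ) : Prop :=
  (t j, t (j + 1)) ∈ ({(0, 0), (1, 2)} : Set (Fin 3 × Fin 3))

namespace IsBlockAt

variable {t : ℕ → Fin 3} {j : ℕ}

theorem ne_two (h : IsBlockAt t j) : t j ≠ 2 := by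
  rcases h with h | h <;> simp_all [Prod.ext_iff]

theorem succ_ne_one (h : IsBlockAt t j) : t (j + 1) ≠ 1 := by
  rcases h with h | h <;> simp_all [Prod.ext_iff]

theorem eq_one_iff_succ_eq_two (h : IsBlockAt t j) : t j = 1 ↔ t (j + 1) = 2 := by
  rcases h with h | h <;> simp_all [Prod.ext_iff]

end IsBlockAt

namespace Admissible

variable {t : ℕ → Fin 3}

theorem isBlockAt (ht : Admissible t) {j : ℕ} (hj : t j ≠ 2) (hj2 : t (j + 2) ≠ 2) :
    IsBlockAt t j := by
  have h1 := ht.eq_one_iff_succ_eq_two j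
  have h2 := ht.eq_one_iff_succ_eq_two (j + 1)
  revert hj hj2 h1 h2
  simp only [IsBlockAt]
  generalize t j = a, t (j + 1) = b, t (j + 1 + 1) = c
  revert a b c
  decide

theorem of_aligned (h : ∀ i, IsBlockAt t (2 * i)) : Admissible t := by
  have two_odd : ∀ n, t n = 2 → Odd n := by
    intro n hn
    obtain ⟨i, rfl | rfl⟩ := Nat.even_or_odd' n
    · exact absurd hn (h i).ne_two
    · exact odd_two_mul_add_one i
  refine ⟨fun n => ?_, fun m n hm hn => (two_odd m hm).add_odd (two_odd n hn)⟩
  obtain ⟨i, rfl | rfl⟩ := Nat.even_or_odd' n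
  · exact (h i).eq_one_iff_succ_eq_two
  · exact iff_of_false (h i).succ_ne_one (h (i + 1)).ne_two

theorem of_offset (h0 : t 0 ≠ 1) (h : ∀ i, IsBlockAt t (2 * i + 1)) : Admissible t := by
  have two_even : ∀ n, t n = 2 → Even n := by
    intro n hn
    obtain ⟨i, rfl | rfl⟩ := Nat.even_or_odd' n
    · exact even_two_mul i
    · exact absurd hn (h i).ne_two
  refine ⟨fun n => ?_, fun m n hm hn => (two_even m hm).add (two_even n hn)⟩
  obtain ⟨i, rfl | rfl⟩ := Nat.even_or_odd' n
  · rcases i with _ | i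
    · exact iff_of_false h0 (h 0).ne_two
    · exact iff_of_false (h i).succ_ne_one (h (i + 1)).ne_two
  · exact (h i).eq_one_iff_succ_eq_two

theorem aligned_or_offset (ht : Admissible t) :
    (∀ i, IsBlockAt t (2 * i)) ∨ (t 0 ≠ 1 ∧ ∀ i, IsBlockAt t (2 * i + 1)) := by
  by_cases h : ∃ m, Even m ∧ t m = 2
  · obtain ⟨m, hm, hm2⟩ := h
    have hodd : ∀ n, Odd n → t n ≠ 2 := fun n hn hn2 =>
      Nat.not_even_iff_odd.2 (hm.add_odd hn) (ht.even_add_of_eq_two m n hm2 hn2)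
    refine Or.inr ⟨fun h1 => hodd 1 odd_one ((ht.eq_one_iff_succ_eq_two 0).1 h1), fun i => ?_⟩
    exact ht.isBlockAt (hodd _ (odd_two_mul_add_one i)) (hodd _ ⟨i + 1, by ring⟩)
  · push Not at h
    exact Or.inl fun i => ht.isBlockAt (h _ (even_two_mul i)) (h _ ⟨i + 1, by ring⟩)

end Admissible

theorem admissible_iff (t : ℕ → Fin 3) :
    Admissible t ↔
      (∀ i : ℕ, (t (2 * i), t (2 * i + 1)) ∈ ({(0, 0), (1, 2)} : Set (Fin 3 × Fin 3))) ∨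
      (t 0 ∈ ({0, 2} : Set (Fin 3)) ∧
        ∀ i : ℕ, (t (2 * i + 1), t (2 * i + 2)) ∈ ({(0, 0), (1, 2)} : Set (Fin 3 × Fin 3))) := by
  have h0 : ∀ a : Fin 3, a ∈ ({0, 2} : Set (Fin 3)) ↔ a ≠ 1 := by decide
  rw [h0]
  exact ⟨Admissible.aligned_or_offset,
    fun h => h.elim Admissible.of_aligned fun h => Admissible.of_offset h.1 h.2⟩

/-- The first trace subshift of the example CA `F` is exactly the set of one-sided infinite
sequences obtained as (suffixes of) infinite concatenations of the blocks `00` and `12`. -/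
theorem trace1_of_example_CA :
    trace1 Fex =
      { t : ℕ → Fin 3 |
        (∀ i : ℕ, (t (2 * i), t (2 * i + 1)) ∈ ({(0, 0), (1, 2)} : Set (Fin 3 × Fin 3))) ∨
        (t 0 ∈ ({0, 2} : Set (Fin 3)) ∧
          ∀ i : ℕ, (t (2 * i + 1), t (2 * i + 2)) ∈ ({(0, 0), (1, 2)} : Set (Fin 3 × Fin 3))) } := by
  ext t
  rw [Set.mem_ofPred_eq, ← admissible_iff, show Fex = fun c i => rho (c (i + 1)) (c i) from rfl,
    mem_trace1_iff]
  exact ⟨fun ⟨x, hx0, hx⟩ => hx0 ▸ admissible_of_diagram hx, Admissible.exists_diagram⟩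
end
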